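/- arXiv:2605.22972 — 2 statements merged into one kernel-verified Lean document; each statement's English description precedes it below -/
import Mathlib

section
/- Under the TI-with-exceptions kernel ridge regression setup, for every ordered pair (j,k) of distinct indices in {1,…,n} that does not belong to the training index set T, the model prediction satisfies f(j,k) = r_j − r_k, where r_j := δ_o(b̄_j − b̄_{j−1}) + δ_o·h̄·([j = p] − [j = q]). -/
/-!
The dual coefficients are antisymmetric under swapping a pair: `K + c⁻¹I` commutes with the swap
permutation of `T` and the labels are antisymmetric. For a test pair `(j, k) ∉ T` the kernel is
`κd + δₒ([j = j'] + [k = k'])`, so the prediction is `κd · ∑ a` plus `δₒ` times the row sum of `a`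
at `j` and its column sum at `k`; antisymmetry kills `∑ a` and turns the column sum at `k` into
minus the row sum at `k`. The row sum of `a` at `j` over `T` is `b̄ⱼ - b̄ⱼ₋₁ + h̄([j = p] - [j = q])`.
-/

open Real Matrix Finset

noncomputable section

namespace TIExc

/-- Real inverse hyperbolic cosine. -/
def arcosh (x : ℝ) : ℝ := Real.log (x + Real.sqrt (x ^ 2 - 1))

/-- Training index set: adjacent pairs in both orders plus the exception pair in both orders. -/
def T (n p q : ℕ) : Finset (ℕ × ℕ) :=
  ((Finset.Icc 1 (n - 1)).image fun j => (j, j + 1)) ∪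
    ((Finset.Icc 1 (n - 1)).image fun j => (j + 1, j)) ∪ {(p, q), (q, p)}

/-- Exchangeable kernel on ordered pairs of items. -/
def ker (κs κo κd : ℝ) (u u' : ℕ × ℕ) : ℝ :=
  if u = u' then κs else if u.1 = u'.1 ∨ u.2 = u'.2 then κo else κd

/-- Training labels. -/
def lab (p q : ℕ) (u : ℕ × ℕ) : ℝ :=
  if u = (p, q) then 1 else if u = (q, p) then -1 else if u.1 < u.2 then 1 else -1

/-- The training-set kernel matrix. -/
def Kmat (n p q : ℕ) (κs κo κd : ℝ) : Matrix ↥(T n p q) ↥(T n p q) ℝ :=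
  fun u u' => ker κs κo κd u.1 u'.1

/-- Dual coefficients `a = (K + c⁻¹ I)⁻¹ y`. -/
def dual (n p q : ℕ) (κs κo κd c : ℝ) : ↥(T n p q) → ℝ :=
  (Kmat n p q κs κo κd + c⁻¹ • (1 : Matrix ↥(T n p q) ↥(T n p q) ℝ))⁻¹ *ᵥ
    fun u => lab p q u.1

/-- Dual coefficient at an ordered pair (`0` off the training set). -/
def aAt (n p q : ℕ) (κs κo κd c : ℝ) (u : ℕ × ℕ) : ℝ :=
  if h : u ∈ T n p q then dual n p q κs κo κd c ⟨u, h⟩ else 0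

/-- `b̄ⱼ = a₍ⱼ,ⱼ₊₁₎`, with the convention `b̄₀ = b̄ₙ = 0`. -/
def bbar (n p q : ℕ) (κs κo κd c : ℝ) (j : ℕ) : ℝ :=
  aAt n p q κs κo κd c (j, j + 1)

/-- `h̄ = a₍ₚ,q₎`. -/
def hbar (n p q : ℕ) (κs κo κd c : ℝ) : ℝ :=
  aAt n p q κs κo κd c (p, q)

/-- Model prediction `f(u) = ∑_{u' ∈ T} κ(u,u') a_{u'}`. -/
def pred (n p q : ℕ) (κs κo κd c : ℝ) (u : ℕ × ℕ) : ℝ :=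
  ∑ u' : ↥(T n p q), ker κs κo κd u u'.1 * dual n p q κs κo κd c u'

/-- Emergent rank `rⱼ = δₒ(b̄ⱼ − b̄ⱼ₋₁) + δₒ h̄ ([j = p] − [j = q])`. -/
def rank (n p q : ℕ) (κs κo κd c : ℝ) (j : ℕ) : ℝ :=
  (κo - κd) * (bbar n p q κs κo κd c j - bbar n p q κs κo κd c (j - 1)) +
    (κo - κd) * hbar n p q κs κo κd c *
      ((if j = p then 1 else 0) - (if j = q then 1 else 0))

/-- `λ = arccosh((1 + c̃⁻¹)/(1 − α))`. -/
def lam (α ctil : ℝ) : ℝ := arcosh ((1 + ctil⁻¹) / (1 - α))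

/-- The no-exception TI rank `r_j^TI`. -/
def rTI (n : ℕ) (l : ℝ) (j : ℕ) : ℝ :=
  Real.sinh ((((n : ℝ) + 1) / 2 - (j : ℝ)) * l) /
    (Real.sinh (((n : ℝ) + 1) / 2 * l) - Real.sinh (((n : ℝ) - 1) / 2 * l))

/-- `D̃ᵢⱼ = cosh((min(i,j) − 1/2)λ)·cosh((n − max(i,j) + 1/2)λ)`. -/
def Dtil (n : ℕ) (l : ℝ) (i j : ℕ) : ℝ :=
  Real.cosh (((min i j : ℕ) - (1 : ℝ) / 2) * l) *
    Real.cosh (((n : ℝ) - (max i j : ℕ) + 1 / 2) * l)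

/-- The quantity `G`. -/
def Gq (n p q : ℕ) (l : ℝ) : ℝ :=
  Real.cosh (((q : ℝ) - 1 / 2) * l) *
      Real.sinh (((n : ℝ) - ((p : ℝ) + (q : ℝ) - 1) / 2) * l) +
    Real.cosh (((n : ℝ) - (p : ℝ) + 1 / 2) * l) *
      Real.sinh ((((p : ℝ) + (q : ℝ) - 1) / 2) * l)

end TIExc

section SwapSums

variable {α : Type*} {S : Finset (α × α)} {a : α × α → ℝ}

lemma sum_swap_of_swap_mem (hS : ∀ u ∈ S, u.swap ∈ S) (f : α × α → ℝ) :
    ∑ u ∈ S, f u.swap = ∑ u ∈ S, f u :=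
  Finset.sum_nbij' Prod.swap Prod.swap hS hS (fun _ _ => rfl) (fun _ _ => rfl) (fun _ _ => rfl)

lemma sum_eq_zero_of_swap_antisymm (hS : ∀ u ∈ S, u.swap ∈ S) (ha : ∀ u, a u.swap = -a u) :
    ∑ u ∈ S, a u = 0 := by
  have h := sum_swap_of_swap_mem hS a
  simp only [ha, Finset.sum_neg_distrib] at h
  linarith

lemma sum_filter_snd_eq_neg_of_swap_antisymm [DecidableEq α] (hS : ∀ u ∈ S, u.swap ∈ S)
    (ha : ∀ u, a u.swap = -a u) (k : α) :
    ∑ u ∈ S with u.2 = k, a u = -∑ u ∈ S with u.1 = k, a u := by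
  rw [Finset.sum_filter, Finset.sum_filter, ← sum_swap_of_swap_mem hS, ← Finset.sum_neg_distrib]
  refine Finset.sum_congr rfl fun u _ => ?_
  simp only [Prod.snd_swap, ha]
  split_ifs <;> simp

end SwapSums

lemma Matrix.inv_mulVec_comp_of_submatrix_eq {ι : Type*} [Fintype ι] [DecidableEq ι]
    {M : Matrix ι ι ℝ} (σ : ι ≃ ι) (hM : M.submatrix σ σ = M) (y : ι → ℝ) :
    (M⁻¹ *ᵥ y) ∘ σ = M⁻¹ *ᵥ (y ∘ σ) := by
  conv_rhs => rw [← hM, Matrix.inv_submatrix_equiv, Matrix.submatrix_mulVec_equiv]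
  simp [Function.comp_def]

namespace TIExc

lemma ker_of_ne {κs κo κd : ℝ} {u u' : ℕ × ℕ} (h : u ≠ u') :
    ker κs κo κd u u' =
      κd + (κo - κd) * ((if u.1 = u'.1 then 1 else 0) + (if u.2 = u'.2 then 1 else 0)) := by
  have : ¬(u.1 = u'.1 ∧ u.2 = u'.2) := fun h' => h (Prod.ext h'.1 h'.2)
  rw [ker, if_neg h]
  split_ifs <;> first | (exfalso; tauto) | ring

lemma ker_swap (κs κo κd : ℝ) (u v : ℕ × ℕ) :
    ker κs κo κd u.swap v.swap = ker κs κo κd u v := by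
  simp only [ker, Prod.swap_inj, Prod.fst_swap, Prod.snd_swap, or_comm]

lemma sum_ker_mul_eq_sub_of_swap_antisymm {S : Finset (ℕ × ℕ)} {a : ℕ × ℕ → ℝ}
    (hS : ∀ u ∈ S, u.swap ∈ S) (ha : ∀ u, a u.swap = -a u) (κs κo κd : ℝ) {j k : ℕ}
    (hjk : (j, k) ∉ S) :
    ∑ u ∈ S, ker κs κo κd (j, k) u * a u =
      (κo - κd) * (∑ u ∈ S with u.1 = j, a u - ∑ u ∈ S with u.1 = k, a u) := by
  have hexp : ∑ u ∈ S, ker κs κo κd (j, k) u * a u =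
      κd * ∑ u ∈ S, a u + (κo - κd) * (∑ u ∈ S with u.1 = j, a u + ∑ u ∈ S with u.2 = k, a u) := by
    simp only [Finset.sum_filter, Finset.mul_sum, ← Finset.sum_add_distrib]
    refine Finset.sum_congr rfl fun u hu => ?_
    rw [ker_of_ne (ne_of_mem_of_not_mem hu hjk).symm]
    simp only [eq_comm (a := j), eq_comm (a := k)]
    split_ifs <;> ring
  rw [hexp, sum_eq_zero_of_swap_antisymm hS ha, sum_filter_snd_eq_neg_of_swap_antisymm hS ha]
  ring

lemma swap_mem_T {n p q : ℕ} {u : ℕ × ℕ} (h : u ∈ T n p q) : u.swap ∈ T n p q := by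
  simp only [T, Finset.mem_union, Finset.mem_image, Finset.mem_insert,
    Finset.mem_singleton] at h ⊢
  aesop

lemma fst_ne_snd_of_mem_T {n p q : ℕ} (hpq : p ≠ q) {u : ℕ × ℕ} (h : u ∈ T n p q) :
    u.1 ≠ u.2 := by
  simp only [T, Finset.mem_union, Finset.mem_image, Finset.mem_insert,
    Finset.mem_singleton] at h
  rcases h with ((⟨m, -, rfl⟩ | ⟨m, -, rfl⟩) | rfl | rfl) <;> simp <;> omega

def swapT (n p q : ℕ) : T n p q ≃ T n p q :=
  (Equiv.prodComm ℕ ℕ).subtypeEquiv fun _ => ⟨swap_mem_T, fun h => by simpa using swap_mem_T h⟩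

lemma lab_swap {p q : ℕ} (hpq : p ≠ q) {u : ℕ × ℕ} (hu : u.1 ≠ u.2) :
    lab p q u.swap = -lab p q u := by
  obtain ⟨x, y⟩ := u
  simp only [lab, Prod.swap_prod_mk, Prod.mk.injEq]
  split_ifs <;> simp_all <;> omega

lemma dual_swapT {n p q : ℕ} (hpq : p ≠ q) (κs κo κd c : ℝ) (u : T n p q) :
    dual n p q κs κo κd c (swapT n p q u) = -dual n p q κs κo κd c u := by
  have hK : (Kmat n p q κs κo κd + c⁻¹ • 1).submatrix (swapT n p q) (swapT n p q) =
      Kmat n p q κs κo κd + c⁻¹ • 1 := by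
    rw [Matrix.submatrix_add, Matrix.submatrix_smul, Pi.add_apply, Pi.add_apply,
      Pi.smul_apply, Pi.smul_apply, Matrix.submatrix_one_equiv]
    congr 1
    ext v w
    exact ker_swap κs κo κd v.1 w.1
  have hlab : (fun v : T n p q => lab p q v.1) ∘ swapT n p q = -fun v => lab p q v.1 := by
    ext v
    exact lab_swap hpq (fst_ne_snd_of_mem_T hpq v.2)
  have := congrFun (Matrix.inv_mulVec_comp_of_submatrix_eq _ hK (fun v => lab p q v.1)) u
  rwa [hlab, Matrix.mulVec_neg] at this

lemma aAt_swap {n p q : ℕ} (hpq : p ≠ q) (κs κo κd c : ℝ) (u : ℕ × ℕ) :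
    aAt n p q κs κo κd c u.swap = -aAt n p q κs κo κd c u := by
  by_cases h : u ∈ T n p q
  · rw [aAt, dif_pos (swap_mem_T h), aAt, dif_pos h]
    exact dual_swapT hpq κs κo κd c ⟨u, h⟩
  · have h' : u.swap ∉ T n p q := fun hs => h (by simpa using swap_mem_T hs)
    rw [aAt, dif_neg h', aAt, dif_neg h, neg_zero]

lemma bbar_eq_zero_of_not_mem {n p q : ℕ} (hgap : 2 ≤ p - q) (κs κo κd c : ℝ) {x : ℕ}
    (hx : x ∉ Finset.Icc 1 (n - 1)) : bbar n p q κs κo κd c x = 0 := by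
  have hnot : (x, x + 1) ∉ T n p q := by
    simp only [Finset.mem_Icc] at hx
    simp only [T, Finset.mem_union, Finset.mem_image, Finset.mem_Icc, Finset.mem_insert,
      Finset.mem_singleton, Prod.mk.injEq]
    omega
  rw [bbar, aAt, dif_neg hnot]

lemma sum_T {n p q : ℕ} (hgap : 2 ≤ p - q) (g : ℕ × ℕ → ℝ) :
    ∑ u ∈ T n p q, g u = ∑ m ∈ Finset.Icc 1 (n - 1), g (m, m + 1) +
      ∑ m ∈ Finset.Icc 1 (n - 1), g (m + 1, m) + g (p, q) + g (q, p) := by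
  have hdisj : Disjoint ((Finset.Icc 1 (n - 1)).image fun m => (m, m + 1))
      ((Finset.Icc 1 (n - 1)).image fun m => (m + 1, m)) := by
    simp only [Finset.disjoint_left, Finset.mem_image, Finset.mem_Icc]
    rintro _ ⟨m, -, rfl⟩ ⟨m', -, h⟩
    simp only [Prod.mk.injEq] at h
    omega
  have hdisj' : Disjoint (((Finset.Icc 1 (n - 1)).image fun m => (m, m + 1)) ∪
      ((Finset.Icc 1 (n - 1)).image fun m => (m + 1, m))) {(p, q), (q, p)} := by
    simp only [Finset.disjoint_right, Finset.mem_insert, Finset.mem_singleton, Finset.mem_union,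
      Finset.mem_image]
    rintro _ (rfl | rfl) <;> simp only [Prod.mk.injEq] <;> omega
  rw [T, Finset.sum_union hdisj', Finset.sum_union hdisj,
    Finset.sum_image fun _ _ _ _ h => (Prod.mk.inj h).1,
    Finset.sum_image fun _ _ _ _ h => (Prod.mk.inj h).2,
    Finset.sum_pair (by simp only [Ne, Prod.mk.injEq]; omega)]
  ring

lemma sum_filter_fst_aAt {n p q : ℕ} (hgap : 2 ≤ p - q) (κs κo κd c : ℝ) (j : ℕ) :
    ∑ u ∈ T n p q with u.1 = j, aAt n p q κs κo κd c u =
      bbar n p q κs κo κd c j - bbar n p q κs κo κd c (j - 1) +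
        hbar n p q κs κo κd c * ((if j = p then 1 else 0) - (if j = q then 1 else 0)) := by
  have hpq : p ≠ q := by omega
  set b := bbar n p q κs κo κd c
  have hb : ∀ x ∉ Finset.Icc 1 (n - 1), b x = 0 := fun x hx =>
    bbar_eq_zero_of_not_mem hgap κs κo κd c hx
  have hforward : ∑ m ∈ Finset.Icc 1 (n - 1), (if m = j then b m else 0) = b j := by
    rw [Finset.sum_ite_eq']
    exact ite_eq_left_iff.2 fun hj => (hb j hj).symm
  have hbackward :
      ∑ m ∈ Finset.Icc 1 (n - 1), (if m + 1 = j then -b m else 0) = -b (j - 1) := by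
    rcases j with _ | j
    -- `0 - 1 = 0` in `ℕ`, and `b̄₀ = 0`
    · simp [hb 0 (by simp)]
    · simp only [add_left_inj, Nat.add_sub_cancel, Finset.sum_ite_eq']
      exact ite_eq_left_iff.2 fun hj => by rw [hb j hj, neg_zero]
  have hrev : ∀ m, aAt n p q κs κo κd c (m + 1, m) = -b m :=
    fun m => aAt_swap hpq κs κo κd c (m, m + 1)
  have hqp : aAt n p q κs κo κd c (q, p) = -hbar n p q κs κo κd c :=
    aAt_swap hpq κs κo κd c (p, q)
  rw [Finset.sum_filter, sum_T hgap, hqp]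
  simp only [hrev, show ∀ m, aAt n p q κs κo κd c (m, m + 1) = b m from fun _ => rfl,
    show aAt n p q κs κo κd c (p, q) = hbar n p q κs κo κd c from rfl]
  rw [hforward, hbackward]
  simp only [eq_comm (a := p), eq_comm (a := q)]
  split_ifs <;> ring

lemma pred_eq_sum_aAt (n p q : ℕ) (κs κo κd c : ℝ) (u : ℕ × ℕ) :
    pred n p q κs κo κd c u = ∑ u' ∈ T n p q, ker κs κo κd u u' * aAt n p q κs κo κd c u' := by
  rw [pred, ← Finset.sum_coe_sort (T n p q)]
  exact Finset.sum_congr rfl fun u' _ => by rw [aAt, dif_pos u'.2]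

lemma rank_eq_mul_sum_filter_fst {n p q : ℕ} (hgap : 2 ≤ p - q) (κs κo κd c : ℝ) (j : ℕ) :
    rank n p q κs κo κd c j = (κo - κd) * ∑ u ∈ T n p q with u.1 = j, aAt n p q κs κo κd c u := by
  rw [sum_filter_fst_aAt hgap, rank]
  ring

theorem test_prediction_is_rank_difference_general
    (n p q : ℕ) (κs κo κd c : ℝ)
    (hgap : 2 ≤ p - q) :
    ∀ j k : ℕ, 1 ≤ j → j ≤ n → 1 ≤ k → k ≤ n → j ≠ k → (j, k) ∉ T n p q →
      pred n p q κs κo κd c (j, k) =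
        rank n p q κs κo κd c j - rank n p q κs κo κd c k := by
  intro j k _ _ _ _ _ hjk
  have hpq : p ≠ q := by omega
  rw [pred_eq_sum_aAt, sum_ker_mul_eq_sub_of_swap_antisymm (fun _ => swap_mem_T)
    (aAt_swap hpq κs κo κd c) κs κo κd hjk, rank_eq_mul_sum_filter_fst hgap,
    rank_eq_mul_sum_filter_fst hgap, mul_sub]

/-- On test pairs, the prediction decomposes as a difference of emergent ranks. -/
theorem test_prediction_is_rank_difference
    (n p q : ℕ) (κs κo κd c : ℝ)
    (hn : 3 ≤ n) (hq1 : 1 ≤ q) (hqp : q < p) (hpn : p ≤ n) (hgap : 2 ≤ p - q)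
    (hκd : 0 ≤ κd) (hκo : κd < κo) (hκs : 2 * (κo - κd) ≤ κs - κd) (hc : 0 < c) :
    ∀ j k : ℕ, 1 ≤ j → j ≤ n → 1 ≤ k → k ≤ n → j ≠ k → (j, k) ∉ T n p q →
      pred n p q κs κo κd c (j, k) =
        rank n p q κs κo κd c j - rank n p q κs κo κd c k :=
  test_prediction_is_rank_difference_general n p q κs κo κd c hgap

end TIExc
end
end

section
/- Let m ≥ 1 be an integer and a, b real numbers with b ≠ 0 and a/b < −2, and let B be the m×m matrix with B_{ii} = a, B_{ij} = b when |i−j| = 1, and B_{ij} = 0 otherwise. Then B is invertible and, with λ := arccosh(−a/(2b)), its inverse satisfies B⁻¹_{ij} = −[cosh((m+1−|j−i|)λ) − cosh((m+1−i−j)λ)] / (2b·sinh(λ)·sinh((m+1)λ)) for all 1 ≤ i, j ≤ m. -/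
/-!
With `cosh λ = -a/(2b)`, every `x ↦ cosh (c + x λ)` solves the recurrence
`b f(x-1) + a f(x) + b f(x+1) = 0`. So for fixed `q` and `M = m + 1` the function
`cosh ((M - |q - x|) λ) - cosh ((M - x - q) λ)` solves it for `x ≠ q` and vanishes at `x = 0`
and `x = M`, while the kink of `|q - x|` at `x = q` leaves the residual
`-2b sinh λ sinh (M λ)`. Its values on `{1, …, m}²` form a matrix `G` with
`B G = -2b sinh λ sinh (M λ) • 1`, and this scalar is nonzero because `λ > 0`.
-/

open Real Matrix Finset

noncomputable section

def arcosh (x : ℝ) : ℝ := Real.log (x + Real.sqrt (x ^ 2 - 1))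

def tridiagToeplitz {α : Type*} [Zero α] (m : ℕ) (a b : α) : Matrix (Fin m) (Fin m) α :=
  of fun i j => if i = j then a else if (i : ℕ) + 1 = j ∨ (j : ℕ) + 1 = i then b else 0

lemma tridiagToeplitz_apply_eq_add {α : Type*} [AddZeroClass α] (m : ℕ) (a b : α)
    (i j : Fin m) :
    tridiagToeplitz m a b i j =
      (if (j : ℕ) = i then a else 0) + (if (j : ℕ) = i + 1 then b else 0) +
        (if (j : ℕ) + 1 = i then b else 0) := by
  simp only [tridiagToeplitz, of_apply, Fin.ext_iff]
  split_ifs <;> first | omega | simp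

lemma tridiagToeplitz_mulVec_apply {α : Type*} [NonAssocSemiring α] (m : ℕ) (a b : α)
    (v : ℕ → α) (h0 : v 0 = 0) (hm : v (m + 1) = 0) (i : Fin m) :
    (tridiagToeplitz m a b *ᵥ fun k => v (k + 1)) i =
      b * v i + a * v (i + 1) + b * v (i + 2) := by
  have hbelow : (∑ k ∈ range m, if k + 1 = (i : ℕ) then b * v (k + 1) else 0) = b * v i := by
    simpa [h0, eq_comm] using
      (sum_range_succ' (fun n => if n = (i : ℕ) then b * v n else 0) m).symm
  have habove : (if (i : ℕ) + 1 < m then b * v (i + 2) else 0) = b * v (i + 2) := by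
    split_ifs with h
    · rfl
    · rw [show (i : ℕ) + 2 = m + 1 by omega, hm, mul_zero]
  simp only [mulVec, dotProduct, tridiagToeplitz_apply_eq_add, add_mul, ite_mul, zero_mul,
    sum_add_distrib]
  rw [Fin.sum_univ_eq_sum_range (fun k => if k = (i : ℕ) then a * v (k + 1) else 0),
    Fin.sum_univ_eq_sum_range (fun k => if k = (i : ℕ) + 1 then b * v (k + 1) else 0),
    Fin.sum_univ_eq_sum_range (fun k => if k + 1 = (i : ℕ) then b * v (k + 1) else 0), hbelow]
  simp only [sum_ite_eq', mem_range, Fin.is_lt, ↓reduceIte, habove]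
  abel

lemma cosh_sub_add_cosh_add (u l : ℝ) : cosh (u - l) + cosh (u + l) = 2 * cosh l * cosh u := by
  rw [cosh_sub, cosh_add]
  ring

def green (M lam x q : ℝ) : ℝ := cosh ((M - |q - x|) * lam) - cosh ((M - x - q) * lam)

section green

variable {M lam q : ℝ}

lemma green_zero_left (hq : 0 ≤ q) : green M lam 0 q = 0 := by
  simp [green, abs_of_nonneg hq]

lemma green_M_left (hq : q ≤ M) : green M lam M q = 0 := by
  rw [green, abs_of_nonpos (by linarith), ← cosh_neg ((M - M - q) * lam)]
  ring_nf

lemma green_sub_one_add_green_add_one {x : ℝ} (h : 1 ≤ |x - q|) :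
    green M lam (x - 1) q + green M lam (x + 1) q = 2 * cosh lam * green M lam x q := by
  have hreflect := cosh_sub_add_cosh_add ((M - x - q) * lam) lam
  rcases le_abs'.1 h with hleft | hright
  · have hfree := cosh_sub_add_cosh_add ((M - (q - x)) * lam) lam
    rw [green, green, green, abs_of_nonneg (by linarith), abs_of_nonneg (by linarith),
      abs_of_nonneg (by linarith)]
    linear_combination (norm := ring_nf) hfree - hreflect
  · have hfree := cosh_sub_add_cosh_add ((M - (x - q)) * lam) lam
    rw [green, green, green, abs_of_nonpos (by linarith), abs_of_nonpos (by linarith),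
      abs_of_nonpos (by linarith)]
    linear_combination (norm := ring_nf) hfree - hreflect

lemma green_sub_one_add_green_add_one_self :
    green M lam (q - 1) q + green M lam (q + 1) q =
      2 * cosh lam * green M lam q q - 2 * sinh lam * sinh (M * lam) := by
  have hreflect := cosh_sub_add_cosh_add ((M - q - q) * lam) lam
  have hpeak := cosh_sub (M * lam) lam
  rw [green, green, green, sub_sub_cancel, sub_add_cancel_left, sub_self, abs_one, abs_neg,
    abs_one, abs_zero]
  linear_combination (norm := ring_nf) 2 * hpeak - hreflect

end green

def greenMatrix (m : ℕ) (lam : ℝ) : Matrix (Fin m) (Fin m) ℝ :=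
  of fun i j => green (m + 1) lam ((i : ℝ) + 1) ((j : ℝ) + 1)

theorem tridiagToeplitz_mul_greenMatrix {m : ℕ} {a b lam : ℝ} (ha : a = -2 * b * cosh lam) :
    tridiagToeplitz m a b * greenMatrix m lam =
      (-2 * b * sinh lam * sinh ((m + 1) * lam)) • 1 := by
  ext i j
  have hcol := tridiagToeplitz_mulVec_apply m a b (fun n => green (m + 1) lam n ((j : ℝ) + 1))
    (by simp only [Nat.cast_zero]; exact green_zero_left (by positivity))
    (by push_cast; exact green_M_left (by norm_cast; omega)) i
  push_cast at hcol
  change (tridiagToeplitz m a b *ᵥ fun k => green (m + 1) lam ((k : ℝ) + 1) ((j : ℝ) + 1)) i = _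
  rw [hcol, ha, Matrix.smul_apply, one_apply, smul_eq_mul]
  rcases eq_or_ne i j with rfl | hij
  · have key := green_sub_one_add_green_add_one_self (M := (m : ℝ) + 1) (lam := lam)
      (q := (i : ℝ) + 1)
    rw [add_sub_cancel_right, add_assoc, one_add_one_eq_two] at key
    rw [if_pos rfl]
    linear_combination b * key
  · have hdist : 1 ≤ |((i : ℝ) + 1) - ((j : ℝ) + 1)| := by
      rw [add_sub_add_right_eq_sub]
      exact_mod_cast Int.one_le_abs (sub_ne_zero.2 (by omega : (i : ℤ) ≠ j))
    have key := green_sub_one_add_green_add_one (M := (m : ℝ) + 1) (lam := lam) hdist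
    rw [add_sub_cancel_right, add_assoc, one_add_one_eq_two] at key
    rw [if_neg hij]
    linear_combination b * key

theorem tridiagonal_toeplitz_inverse_general
    (m : ℕ) (a b : ℝ) (hb : b ≠ 0) (hab : a / b < -2)
    (B : Matrix (Fin m) (Fin m) ℝ)
    (hB : ∀ i j : Fin m, B i j =
      if i = j then a
      else if (i : ℕ) + 1 = (j : ℕ) ∨ (j : ℕ) + 1 = (i : ℕ) then b
      else 0) :
    IsUnit B ∧
      ∀ i j : Fin m, B⁻¹ i j =
        -((Real.cosh (((m : ℝ) + 1 - |((j : ℝ) + 1) - ((i : ℝ) + 1)|) *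
              _root_.arcosh (-(a / (2 * b)))) -
            Real.cosh (((m : ℝ) + 1 - ((i : ℝ) + 1) - ((j : ℝ) + 1)) *
              _root_.arcosh (-(a / (2 * b))))) /
          (2 * b * Real.sinh (_root_.arcosh (-(a / (2 * b)))) *
            Real.sinh (((m : ℝ) + 1) * _root_.arcosh (-(a / (2 * b)))))) := by
  set t := -(a / (2 * b))
  have ht : 1 < t := by
    have hhalf : a / (2 * b) = a / b / 2 := by ring
    simp only [t, hhalf]
    linarith
  set lam := _root_.arcosh t
  -- `_root_.arcosh` is definitionally Mathlib's `Real.arcosh`.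
  have hlam : 0 < lam := Real.arcosh_pos ht
  have ha : a = -2 * b * cosh lam := by
    rw [show cosh lam = t from Real.cosh_arcosh ht.le]
    simp only [t]
    field_simp
  set c := -2 * b * sinh lam * sinh ((m + 1) * lam)
  have hc : c ≠ 0 := by
    have hsinhM : 0 < sinh ((m + 1) * lam) := sinh_pos_iff.2 (by positivity)
    have hsinh : 0 < sinh lam := sinh_pos_iff.2 hlam
    simp only [c]; positivity
  have hBG : B * (c⁻¹ • greenMatrix m lam) = 1 := by
    rw [show B = tridiagToeplitz m a b from Matrix.ext hB, mul_smul_comm,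
      tridiagToeplitz_mul_greenMatrix ha, smul_smul, inv_mul_cancel₀ hc, one_smul]
  refine ⟨IsUnit.of_mul_eq_one _ hBG, fun i j => ?_⟩
  rw [inv_eq_right_inv hBG]
  simp only [c, Matrix.smul_apply, greenMatrix, green, of_apply, smul_eq_mul]
  field_simp

/-- Hu & O'Connell: closed-form inverse of a symmetric tridiagonal Toeplitz
matrix with diagonal `a` and off-diagonal `b`, when `a/b < −2`. Indices are
1-based in the formula, so `i`, `j` correspond to `(i : ℕ) + 1`, `(j : ℕ) + 1`. -/
theorem tridiagonal_toeplitz_inverse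
    (m : ℕ) (hm : 1 ≤ m) (a b : ℝ) (hb : b ≠ 0) (hab : a / b < -2)
    (B : Matrix (Fin m) (Fin m) ℝ)
    (hB : ∀ i j : Fin m, B i j =
      if i = j then a
      else if (i : ℕ) + 1 = (j : ℕ) ∨ (j : ℕ) + 1 = (i : ℕ) then b
      else 0) :
    IsUnit B ∧
      ∀ i j : Fin m, B⁻¹ i j =
        -((Real.cosh (((m : ℝ) + 1 - |((j : ℝ) + 1) - ((i : ℝ) + 1)|) *
              _root_.arcosh (-(a / (2 * b)))) -
            Real.cosh (((m : ℝ) + 1 - ((i : ℝ) + 1) - ((j : ℝ) + 1)) *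
              _root_.arcosh (-(a / (2 * b))))) /
          (2 * b * Real.sinh (_root_.arcosh (-(a / (2 * b)))) *
            Real.sinh (((m : ℝ) + 1) * _root_.arcosh (-(a / (2 * b)))))) :=
  tridiagonal_toeplitz_inverse_general m a b hb hab B hB
end
end
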